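/- In the meta-rotation poset, if P and P' are closed subsets with P ⊆ P', then the maximum weight stable matching generated by P dominates (is weakly boy-preferred to) the one generated by P'. In particular, the closed subset {S} generates the boy-optimal matching and the closed subset consisting of all meta-rotations except T generates the girl-optimal matching within the sublattice of maximum weight stable matchings. -/

import Mathlib

/-- `rB b g` is the rank boy `b` gives girl `g` (smaller = more preferred), and
`rG g b` the rank girl `g` gives boy `b`.  A matching (bijection) `M` is stable if
no pair `(b, g)` prefer each other to their partners. -/
def StableM {B G : Type*} (rB : B → G → ℕ) (rG : G → B → ℕ) (M : B ≃ G) : Prop :=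
  ∀ (b : B) (g : G), ¬ (rB b g < rB b (M b) ∧ rG g b < rG g (M.symm g))

/-- The total weight of a matching. -/
def matchWeight {B G : Type*} [Fintype B] (w : B → G → ℚ) (M : B ≃ G) : ℚ :=
  ∑ b, w b (M b)

/-- A maximum weight stable matching. -/
def MaxWtStable {B G : Type*} [Fintype B] (rB : B → G → ℕ) (rG : G → B → ℕ)
    (w : B → G → ℚ) (M : B ≃ G) : Prop :=
  StableM rB rG M ∧ ∀ N : B ≃ G, StableM rB rG N → matchWeight w N ≤ matchWeight w M

/-- A rotation: a cyclic sequence of `r ≥ 2` distinct pairs `(b_i, g_i)`.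
Indices live in `ZMod r` so that `i + 1` wraps around. -/
structure Rotation (B G : Type*) where
  r : ℕ
  two_le : 2 ≤ r
  bs : ZMod r → B
  gs : ZMod r → G
  inj_bs : Function.Injective bs
  inj_gs : Function.Injective gs

/-- `ρ` is exposed in `M`: each `b_i` is matched to `g_i`, and `g_{i+1} = s_M(b_i)` is
the first girl on `b_i`'s list preferring `b_i` to her `M`-partner. -/
def Exposed {B G : Type*} (rB : B → G → ℕ) (rG : G → B → ℕ) (M : B ≃ G)
    (ρ : Rotation B G) : Prop :=
  (∀ i, M (ρ.bs i) = ρ.gs i) ∧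
    (∀ i, rG (ρ.gs (i + 1)) (ρ.bs i) < rG (ρ.gs (i + 1)) (M.symm (ρ.gs (i + 1)))) ∧
    (∀ i, ∀ g : G, rB (ρ.bs i) g < rB (ρ.bs i) (ρ.gs (i + 1)) →
      ¬ (rG g (ρ.bs i) < rG g (M.symm g)))

/-- `M'` results from `M` by eliminating the rotation `ρ` (exposed in `M`):
each `b_i` moves from `g_i` to `g_{i+1}`, everyone else keeps their partner. -/
def Eliminates {B G : Type*} (rB : B → G → ℕ) (rG : G → B → ℕ)
    (M : B ≃ G) (ρ : Rotation B G) (M' : B ≃ G) : Prop :=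
  Exposed rB rG M ρ ∧ (∀ i, M' (ρ.bs i) = ρ.gs (i + 1)) ∧
    ∀ b : B, (∀ i, b ≠ ρ.bs i) → M' b = M b

/-- `ElimChain rB rG M L M'`: the list `L` of rotations can be eliminated one after
another starting from `M` and ending at `M'`. -/
def ElimChain {B G : Type*} (rB : B → G → ℕ) (rG : G → B → ℕ) :
    (B ≃ G) → List (Rotation B G) → (B ≃ G) → Prop
  | M, [], M' => M = M'
  | M, ρ :: L, M' => ∃ N : B ≃ G, Eliminates rB rG M ρ N ∧ ElimChain rB rG N L M'

/-- The boy-optimal stable matching. -/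
def BoyOptimal {B G : Type*} (rB : B → G → ℕ) (rG : G → B → ℕ) (M₀ : B ≃ G) : Prop :=
  StableM rB rG M₀ ∧ ∀ M : B ≃ G, StableM rB rG M → ∀ b, rB b (M₀ b) ≤ rB b (M b)

/-- The girl-optimal stable matching. -/
def GirlOptimal {B G : Type*} (rB : B → G → ℕ) (rG : G → B → ℕ) (Mz : B ≃ G) : Prop :=
  StableM rB rG Mz ∧ ∀ M : B ≃ G, StableM rB rG M → ∀ g, rG g (Mz.symm g) ≤ rG g (M.symm g)

/-- `ρ` is a rotation of the instance: it is exposed in some stable matching. -/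
def IsRotation {B G : Type*} (rB : B → G → ℕ) (rG : G → B → ℕ) (ρ : Rotation B G) : Prop :=
  ∃ M : B ≃ G, StableM rB rG M ∧ Exposed rB rG M ρ

/-- The set of pairs of a rotation (rotations are identified up to cyclic shift by
having equal pair sets). -/
def rotPairs {B G : Type*} (ρ : Rotation B G) : Set (B × G) :=
  {p | ∃ i, p = (ρ.bs i, ρ.gs i)}

/-- `ρ` moves `b` to `g`: after eliminating `ρ`, `b` is matched to `g`. -/
def MovesTo {B G : Type*} (ρ : Rotation B G) (b : B) (g : G) : Prop :=
  ∃ i, ρ.bs i = b ∧ ρ.gs (i + 1) = g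

/-- `ρ` moves `b` from `g`: before eliminating `ρ`, `b` is matched to `g`. -/
def MovesFrom {B G : Type*} (ρ : Rotation B G) (b : B) (g : G) : Prop :=
  ∃ i, ρ.bs i = b ∧ ρ.gs i = g

/-- `ρ'` precedes `ρ` in the rotation poset: `ρ'` is eliminated (up to cyclic shift)
in every sequence of eliminations from the boy-optimal matching `M₀` to a stable
matching in which `ρ` is exposed. -/
def Precedes {B G : Type*} (rB : B → G → ℕ) (rG : G → B → ℕ)
    (ρ' ρ : Rotation B G) : Prop :=
  ∀ (M₀ : B ≃ G) (L : List (Rotation B G)) (M : B ≃ G),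
    BoyOptimal rB rG M₀ → ElimChain rB rG M₀ L M → Exposed rB rG M ρ →
      ∃ ρ'' ∈ L, rotPairs ρ'' = rotPairs ρ'

/-- Vertices of the DAG `G` built from the rotation poset: a source, a sink, and one
vertex per rotation (indexed by `ι`). -/
inductive Vtx (ι : Type*) where
  | src : Vtx ι
  | snk : Vtx ι
  | node : ι → Vtx ι
deriving DecidableEq

instance {ι : Type*} [Fintype ι] [DecidableEq ι] : Fintype (Vtx ι) :=
  Fintype.ofSurjective
    (fun x : Option (Option ι) =>
      match x with
      | none => Vtx.src
      | some none => Vtx.snk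
      | some (some i) => Vtx.node i)
    (by rintro (_ | _ | i) <;> [exact ⟨none, rfl⟩; exact ⟨some none, rfl⟩;
          exact ⟨some (some i), rfl⟩])

/-- `M` is the stable matching generated by the (closed) set `C` of rotation indices:
it is obtained from `M₀` by eliminating the rotations of `C` in some (topological)
order. -/
def GeneratedBy {B G ι : Type*} (rB : B → G → ℕ) (rG : G → B → ℕ) (M₀ : B ≃ G)
    (rot : ι → Rotation B G) (C : Set ι) (M : B ≃ G) : Prop :=
  ∃ L : List ι, (∀ i, i ∈ L ↔ i ∈ C) ∧ ElimChain rB rG M₀ (L.map rot) M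

/-- The defining conditions on the path `P_{bg}` associated to a pair `bg` occurring in
some but not all stable matchings (`M₀` boy-optimal, `Mz` girl-optimal):
from the source to the rotation moving `b` from `g`, or from the rotation moving `b`
to `g` to the sink, or between the two rotations, according to whether `bg ∈ M₀`
and/or `bg ∈ Mz`. -/
def PathSpec {B G ι : Type*} (M₀ Mz : B ≃ G) (rot : ι → Rotation B G)
    (b : B) (g : G) (P : List (Vtx ι)) : Prop :=
  (M₀ b = g ∧ Mz b ≠ g ∧ ∃ i, MovesFrom (rot i) b g ∧
      P.head? = some Vtx.src ∧ P.getLast? = some (Vtx.node i)) ∨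
  (M₀ b ≠ g ∧ Mz b = g ∧ ∃ i, MovesTo (rot i) b g ∧
      P.head? = some (Vtx.node i) ∧ P.getLast? = some Vtx.snk) ∨
  (M₀ b ≠ g ∧ Mz b ≠ g ∧ ∃ i j, MovesTo (rot i) b g ∧ MovesFrom (rot j) b g ∧
      P.head? = some (Vtx.node i) ∧ P.getLast? = some (Vtx.node j))

/-- The cut with source side `S` cuts the path `P`: some edge of `P` crosses from `S`
to its complement. -/
def CutsPath {W : Type*} (S : Set W) (P : List W) : Prop :=
  ∃ q ∈ P.zip P.tail, q.1 ∈ S ∧ q.2 ∉ S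

/-- A closed subset of the meta-rotation poset. -/
def MetaClosed {κ : Type*} (MetaPrec : κ → κ → Prop) (P : Set κ) : Prop :=
  ∀ k ∈ P, ∀ k', MetaPrec k' k → k' ∈ P

/-- The set of rotations contained in the meta-rotations of `P`. -/
def metaRotSet {ι κ : Type*} (metaOf : κ → Set ι) (P : Set κ) : Set ι :=
  {i | ∃ k ∈ P, i ∈ metaOf k}

/-- `M` dominates `M'`: every boy weakly prefers his `M`-partner. -/
def Dominates {B G : Type*} (rB : B → G → ℕ) (M M' : B ≃ G) : Prop :=
  ∀ b, rB b (M b) ≤ rB b (M' b)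

/-! Eliminating rotations only ever moves a boy down his list, so the boy's final partner
is the last girl some eliminated rotation moved him to; monotonicity in the set of
eliminated rotations follows. Stability (preserved by each elimination) is what makes
every move a move down: a boy moving up would block with the girl he moves to. -/

section Elimination

variable {B G : Type*} {rB : B → G → ℕ} {rG : G → B → ℕ}

theorem Dominates.trans {M M' M'' : B ≃ G} (h : Dominates rB M M')
    (h' : Dominates rB M' M'') : Dominates rB M M'' :=
  fun b => (h b).trans (h' b)

theorem Exposed.rank_le_succ {M : B ≃ G} {ρ : Rotation B G} (hM : StableM rB rG M)
    (hρ : Exposed rB rG M ρ) (i : ZMod ρ.r) :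
    rB (ρ.bs i) (ρ.gs i) ≤ rB (ρ.bs i) (ρ.gs (i + 1)) := by
  refine not_lt.mp fun hlt => hM (ρ.bs i) (ρ.gs (i + 1)) ⟨?_, hρ.2.1 i⟩
  rwa [hρ.1 i]

namespace Eliminates

variable {M M' : B ≃ G} {ρ : Rotation B G}

theorem symm_apply_of_eq_gs (h : Eliminates rB rG M ρ M') (i : ZMod ρ.r) :
    M'.symm (ρ.gs i) = ρ.bs (i - 1) := by
  rw [Equiv.symm_apply_eq, h.2.1, sub_add_cancel]

theorem symm_apply_of_ne_gs (h : Eliminates rB rG M ρ M') {g : G} (hg : ∀ i, ρ.gs i ≠ g) :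
    M'.symm g = M.symm g := by
  have hb : ∀ i, M.symm g ≠ ρ.bs i := fun i hi =>
    hg i (by rw [← h.1.1 i, ← hi, Equiv.apply_symm_apply])
  rw [Equiv.symm_apply_eq, h.2.2 _ hb, Equiv.apply_symm_apply]

theorem girl_rank_le (h : Eliminates rB rG M ρ M') (g : G) :
    rG g (M'.symm g) ≤ rG g (M.symm g) := by
  by_cases hg : ∃ i, ρ.gs i = g
  · obtain ⟨i, rfl⟩ := hg
    have := (h.1.2.1 (i - 1)).le
    rwa [sub_add_cancel, ← h.symm_apply_of_eq_gs] at this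
  · push Not at hg
    rw [h.symm_apply_of_ne_gs hg]

theorem stableM (hM : StableM rB rG M) (h : Eliminates rB rG M ρ M') :
    StableM rB rG M' := by
  rintro b g ⟨hboy, hgirl⟩
  have hgirl' := hgirl.trans_le (h.girl_rank_le g)
  by_cases hb : ∃ i, ρ.bs i = b
  · obtain ⟨i, rfl⟩ := hb
    rw [h.2.1 i] at hboy
    exact h.1.2.2 i g hboy hgirl'
  · push Not at hb
    rw [h.2.2 b fun i hi => hb i hi.symm] at hboy
    exact hM b g ⟨hboy, hgirl'⟩

theorem dominates (hM : StableM rB rG M) (h : Eliminates rB rG M ρ M') :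
    Dominates rB M M' := by
  intro b
  by_cases hb : ∃ i, ρ.bs i = b
  · obtain ⟨i, rfl⟩ := hb
    rw [h.1.1 i, h.2.1 i]
    exact h.1.rank_le_succ hM i
  · push Not at hb
    rw [h.2.2 b fun i hi => hb i hi.symm]

end Eliminates

namespace ElimChain

theorem stableM {L : List (Rotation B G)} {M N : B ≃ G} (hM : StableM rB rG M)
    (h : ElimChain rB rG M L N) : StableM rB rG N := by
  induction L generalizing M with
  | nil =>
    obtain rfl : M = N := h
    exact hM
  | cons ρ L ih =>
    obtain ⟨M', hel, h⟩ := h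
    exact ih (hel.stableM hM) h

theorem dominates {L : List (Rotation B G)} {M N : B ≃ G} (hM : StableM rB rG M)
    (h : ElimChain rB rG M L N) : Dominates rB M N := by
  induction L generalizing M with
  | nil =>
    obtain rfl : M = N := h
    exact fun _ => le_rfl
  | cons ρ L ih =>
    obtain ⟨M', hel, h⟩ := h
    exact (hel.dominates hM).trans (ih (hel.stableM hM) h)

theorem rank_le_of_movesTo {L : List (Rotation B G)} {M N : B ≃ G}
    (hM : StableM rB rG M) (h : ElimChain rB rG M L N) {τ : Rotation B G} (hτ : τ ∈ L)
    {b : B} {g : G} (hmove : MovesTo τ b g) : rB b g ≤ rB b (N b) := by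
  induction L generalizing M with
  | nil => exact absurd hτ List.not_mem_nil
  | cons ρ L ih =>
    obtain ⟨M', hel, h⟩ := h
    rcases List.mem_cons.mp hτ with rfl | hτ
    · obtain ⟨i, rfl, rfl⟩ := hmove
      rw [← hel.2.1 i]
      exact h.dominates (hel.stableM hM) _
    · exact ih (hel.stableM hM) h hτ

theorem apply_eq_or_movesTo {L : List (Rotation B G)} {M N : B ≃ G}
    (h : ElimChain rB rG M L N) (b : B) : N b = M b ∨ ∃ τ ∈ L, MovesTo τ b (N b) := by
  induction L generalizing M with
  | nil =>
    obtain rfl : M = N := h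
    exact .inl rfl
  | cons ρ L ih =>
    obtain ⟨M', hel, h⟩ := h
    rcases ih h with hN | ⟨τ, hτ, hmove⟩
    · by_cases hb : ∃ i, ρ.bs i = b
      · obtain ⟨i, rfl⟩ := hb
        exact .inr ⟨ρ, List.mem_cons_self, i, rfl, by rw [hN, hel.2.1 i]⟩
      · push Not at hb
        exact .inl (hN.trans (hel.2.2 b fun i hi => hb i hi.symm))
    · exact .inr ⟨τ, List.mem_cons_of_mem ρ hτ, hmove⟩

theorem dominates_of_subset {L L' : List (Rotation B G)} {M N N' : B ≃ G}
    (hM : StableM rB rG M) (h : ElimChain rB rG M L N) (h' : ElimChain rB rG M L' N')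
    (hLL' : L ⊆ L') : Dominates rB N N' := by
  intro b
  rcases h.apply_eq_or_movesTo b with hN | ⟨τ, hτ, hmove⟩
  · exact hN ▸ h'.dominates hM b
  · exact h'.rank_le_of_movesTo hM (hLL' hτ) hmove

end ElimChain

theorem GeneratedBy.dominates_of_subset {ι : Type*} {M₀ N N' : B ≃ G}
    {rot : ι → Rotation B G} {C C' : Set ι} (hM₀ : StableM rB rG M₀) (hCC' : C ⊆ C')
    (h : GeneratedBy rB rG M₀ rot C N) (h' : GeneratedBy rB rG M₀ rot C' N') :
    Dominates rB N N' := by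
  obtain ⟨L, hL, hchain⟩ := h
  obtain ⟨L', hL', hchain'⟩ := h'
  refine hchain.dominates_of_subset hM₀ hchain' ?_
  intro τ hτ
  obtain ⟨i, hi, rfl⟩ := List.mem_map.mp hτ
  exact List.mem_map_of_mem ((hL' i).mpr (hCC' ((hL i).mp hi)))

end Elimination

theorem metaRotSet_mono {ι κ : Type*} (metaOf : κ → Set ι) {P P' : Set κ} (h : P ⊆ P') :
    metaRotSet metaOf P ⊆ metaRotSet metaOf P' :=
  fun _ ⟨k, hk, hi⟩ => ⟨k, h hk, hi⟩

theorem metaClosed_singleton_of_minimal {κ : Type*} {MetaPrec : κ → κ → Prop} {s : κ}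
    (hs : ∀ k, MetaPrec k s → k = s) : MetaClosed MetaPrec {s} := by
  rintro k rfl k' hk'
  exact hs k' hk'

theorem metaClosed_ne_of_maximal {κ : Type*} {MetaPrec : κ → κ → Prop} {t : κ}
    (ht : ∀ k, MetaPrec t k → k = t) : MetaClosed MetaPrec {k | k ≠ t} := by
  rintro k hk k' hk' rfl
  exact hk (ht k hk')

theorem meta_rotation_traversal_general {B G ι κ : Type*} [Fintype B]
    (rB : B → G → ℕ) (rG : G → B → ℕ)
    (wt : B → G → ℚ)
    (rot : ι → Rotation B G)
    (M₀ : B ≃ G) (hM₀ : BoyOptimal rB rG M₀)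
    (metaOf : κ → Set ι) (MetaPrec : κ → κ → Prop) (sS tT : κ) (hst : sS ≠ tT)
    (hbot : ∀ k, MetaPrec k sS → k = sS) (htop : ∀ k, MetaPrec tT k → k = tT)
    (hchar : ∀ M : B ≃ G, MaxWtStable rB rG wt M ↔
      ∃ P : Set κ, MetaClosed MetaPrec P ∧ sS ∈ P ∧ tT ∉ P ∧
        GeneratedBy rB rG M₀ rot (metaRotSet metaOf P) M) :
    (∀ (P P' : Set κ) (MP MP' : B ≃ G),
        MetaClosed MetaPrec P → MetaClosed MetaPrec P' →
        sS ∈ P → tT ∉ P → sS ∈ P' → tT ∉ P' → P ⊆ P' →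
        GeneratedBy rB rG M₀ rot (metaRotSet metaOf P) MP →
        GeneratedBy rB rG M₀ rot (metaRotSet metaOf P') MP' →
        Dominates rB MP MP') ∧
    (∀ Mb : B ≃ G, GeneratedBy rB rG M₀ rot (metaRotSet metaOf {sS}) Mb →
        MaxWtStable rB rG wt Mb ∧
          ∀ N : B ≃ G, MaxWtStable rB rG wt N → Dominates rB Mb N) ∧
    (∀ Mg : B ≃ G, GeneratedBy rB rG M₀ rot (metaRotSet metaOf {k | k ≠ tT}) Mg →
        MaxWtStable rB rG wt Mg ∧
          ∀ N : B ≃ G, MaxWtStable rB rG wt N → Dominates rB N Mg) := by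
  have dominates_of_subset : ∀ {P P' : Set κ} {M M' : B ≃ G}, P ⊆ P' →
      GeneratedBy rB rG M₀ rot (metaRotSet metaOf P) M →
      GeneratedBy rB rG M₀ rot (metaRotSet metaOf P') M' → Dominates rB M M' :=
    fun hPP' => GeneratedBy.dominates_of_subset hM₀.1 (metaRotSet_mono metaOf hPP')
  refine ⟨fun _ _ _ _ _ _ _ _ _ _ hPP' h h' => dominates_of_subset hPP' h h', ?_, ?_⟩
  · intro Mb hMb
    refine ⟨(hchar Mb).mpr ⟨{sS}, metaClosed_singleton_of_minimal hbot, rfl,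
      fun h => hst (Set.mem_singleton_iff.mp h).symm, hMb⟩, fun N hN => ?_⟩
    obtain ⟨P, -, hsP, -, hN⟩ := (hchar N).mp hN
    exact dominates_of_subset (Set.singleton_subset_iff.mpr hsP) hMb hN
  · intro Mg hMg
    refine ⟨(hchar Mg).mpr ⟨{k | k ≠ tT}, metaClosed_ne_of_maximal htop, hst,
      fun h => h rfl, hMg⟩, fun N hN => ?_⟩
    obtain ⟨P, -, -, htP, hN⟩ := (hchar N).mp hN
    exact dominates_of_subset (by rintro k hk rfl; exact htP hk) hN hMg

/-- In the meta-rotation poset (elements `κ`, each a set of rotations, with bottom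
element `sS` containing the source and top element `tT` containing the sink, whose
closed subsets containing `sS` and not `tT` generate exactly the maximum weight stable
matchings): (a) if `P ⊆ P'` are such closed subsets then the matching generated by `P`
dominates the one generated by `P'`; (b) the closed subset `{sS}` generates the
boy-optimal matching of the sublattice of maximum weight stable matchings; and (c) the
closed subset of all meta-rotations except `tT` generates its girl-optimal matching. -/
theorem meta_rotation_traversal {B G ι κ : Type*} [Fintype B] [Fintype G]
    [DecidableEq B] [DecidableEq G]
    (rB : B → G → ℕ) (rG : G → B → ℕ)
    (hrB : ∀ b, Function.Injective (rB b)) (hrG : ∀ g, Function.Injective (rG g))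
    (wt : B → G → ℚ)
    (rot : ι → Rotation B G) (hrot : ∀ i, IsRotation rB rG (rot i))
    (M₀ : B ≃ G) (hM₀ : BoyOptimal rB rG M₀)
    (metaOf : κ → Set ι) (MetaPrec : κ → κ → Prop) (sS tT : κ) (hst : sS ≠ tT)
    (hbot : ∀ k, MetaPrec k sS → k = sS) (htop : ∀ k, MetaPrec tT k → k = tT)
    (hchar : ∀ M : B ≃ G, MaxWtStable rB rG wt M ↔
      ∃ P : Set κ, MetaClosed MetaPrec P ∧ sS ∈ P ∧ tT ∉ P ∧
        GeneratedBy rB rG M₀ rot (metaRotSet metaOf P) M)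
    (hexists : ∀ P : Set κ, MetaClosed MetaPrec P → sS ∈ P → tT ∉ P →
      ∃ M : B ≃ G, GeneratedBy rB rG M₀ rot (metaRotSet metaOf P) M) :
    (∀ (P P' : Set κ) (MP MP' : B ≃ G),
        MetaClosed MetaPrec P → MetaClosed MetaPrec P' →
        sS ∈ P → tT ∉ P → sS ∈ P' → tT ∉ P' → P ⊆ P' →
        GeneratedBy rB rG M₀ rot (metaRotSet metaOf P) MP →
        GeneratedBy rB rG M₀ rot (metaRotSet metaOf P') MP' →
        Dominates rB MP MP') ∧
    (∀ Mb : B ≃ G, GeneratedBy rB rG M₀ rot (metaRotSet metaOf {sS}) Mb →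
        MaxWtStable rB rG wt Mb ∧
          ∀ N : B ≃ G, MaxWtStable rB rG wt N → Dominates rB Mb N) ∧
    (∀ Mg : B ≃ G, GeneratedBy rB rG M₀ rot (metaRotSet metaOf {k | k ≠ tT}) Mg →
        MaxWtStable rB rG wt Mg ∧
          ∀ N : B ≃ G, MaxWtStable rB rG wt N → Dominates rB N Mg) :=
  meta_rotation_traversal_general rB rG wt rot M₀ hM₀ metaOf MetaPrec sS tT hst hbot htop hchar
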